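/- (Remainder Lemma, determinant part.) Assume the avoidance hypothesis. Then for every u ∈ ℝ² with ‖u‖ ≤ 1, the determinant det((J_h(x+Eu) − J_h(x))·E) is nonnegative, and it equals 0 if and only if c·u₁ + d·u₂ = 0. -/

import Mathlib

noncomputable section

/-- Matrix–vector multiplication, viewed as a map on the Euclidean plane. -/
def mv (M : Matrix (Fin 2) (Fin 2) ℝ) (u : EuclideanSpace ℝ (Fin 2)) :
    EuclideanSpace ℝ (Fin 2) := WithLp.toLp 2 (M.mulVec u)

/-- Range `r(p) = √((p₁−a)² + (p₂−b)²)` to the sensor located at `(a, b)`. -/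
def rr (a b : ℝ) (p : EuclideanSpace ℝ (Fin 2)) : ℝ :=
  Real.sqrt ((p 0 - a) ^ 2 + (p 1 - b) ^ 2)

/-- Bearing `θ(p)`: polar angle in `(−π, π]` of the complex number `(p₁−a) + i(p₂−b)`. -/
def theta (a b : ℝ) (p : EuclideanSpace ℝ (Fin 2)) : ℝ :=
  Complex.arg ⟨p 0 - a, p 1 - b⟩

/-- Jacobian matrix of the range–bearing measurement map at `p`. -/
def Jh (a b : ℝ) (p : EuclideanSpace ℝ (Fin 2)) : Matrix (Fin 2) (Fin 2) ℝ :=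
  !![(p 0 - a) / rr a b p, (p 1 - b) / rr a b p;
     -(p 1 - b) / (rr a b p) ^ 2, (p 0 - a) / (rr a b p) ^ 2]

/-- The range–bearing measurement map `h(p) = (r(p), θ(p))`. -/
def hMeas (a b : ℝ) (p : EuclideanSpace ℝ (Fin 2)) : EuclideanSpace ℝ (Fin 2) :=
  WithLp.toLp 2 ![rr a b p, theta a b p]

/-- The linearization remainder `g(u) = h(x + Eu) − h(x) − J_h(x)·(Eu)`. -/
def gRem (a b : ℝ) (x : EuclideanSpace ℝ (Fin 2)) (E : Matrix (Fin 2) (Fin 2) ℝ)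
    (u : EuclideanSpace ℝ (Fin 2)) : EuclideanSpace ℝ (Fin 2) :=
  hMeas a b (x + mv E u) - hMeas a b x - mv (Jh a b x) (mv E u)


/-! Put `v = x − o` and `w = x + Eu − o`. A direct computation gives
`det (J_h(x + Eu) − J_h(x)) = (‖v‖ + ‖w‖) (‖v‖‖w‖ − ⟪v, w⟫) / (‖v‖² ‖w‖²)`, which is `≥ 0` by
Cauchy–Schwarz, while `det E > 0`. By Lagrange's identity
`‖v‖²‖w‖² − ⟪v, w⟫² = (v₁w₂ − v₂w₁)²`, and `v₁w₂ − v₂w₁ = −(c u₁ + d u₂)`. So the determinant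
vanishes iff this cross product does, unless `v` and `w` point in opposite directions. That would
put `o` on the segment `[x, x + Eu]`, the image of `[0, u]`, which lies in the unit ball: this is
excluded by the avoidance hypothesis. -/

open Matrix Set Metric
open scoped Convex InnerProductSpace

theorem EuclideanSpace.norm_sq_fin_two (v : EuclideanSpace ℝ (Fin 2)) :
    ‖v‖ ^ 2 = v 0 ^ 2 + v 1 ^ 2 := by
  simp [EuclideanSpace.norm_sq_eq, Fin.sum_univ_two]

theorem EuclideanSpace.real_inner_fin_two (v w : EuclideanSpace ℝ (Fin 2)) :
    ⟪v, w⟫_ℝ = v 0 * w 0 + v 1 * w 1 := by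
  simp [EuclideanSpace.inner_eq_star_dotProduct, dotProduct, Fin.sum_univ_two, mul_comm]

theorem EuclideanSpace.norm_mul_norm_sq_eq_inner_sq_add_cross_sq
    (v w : EuclideanSpace ℝ (Fin 2)) :
    (‖v‖ * ‖w‖) ^ 2 = ⟪v, w⟫_ℝ ^ 2 + (v 0 * w 1 - v 1 * w 0) ^ 2 := by
  rw [mul_pow, norm_sq_fin_two, norm_sq_fin_two, real_inner_fin_two]
  ring

theorem EuclideanSpace.real_inner_eq_norm_mul_norm_iff_cross_eq_zero
    {v w : EuclideanSpace ℝ (Fin 2)} (h : ¬SameRay ℝ (-v) w) :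
    ⟪v, w⟫_ℝ = ‖v‖ * ‖w‖ ↔ v 0 * w 1 - v 1 * w 0 = 0 := by
  have hL := norm_mul_norm_sq_eq_inner_sq_add_cross_sq v w
  constructor
  · intro heq
    rw [heq, left_eq_add] at hL
    exact pow_eq_zero_iff two_ne_zero |>.1 hL
  · intro hcross
    have hfac : (‖v‖ * ‖w‖ - ⟪v, w⟫_ℝ) * (‖v‖ * ‖w‖ + ⟪v, w⟫_ℝ) = 0 := by
      linear_combination hL + (v 0 * w 1 - v 1 * w 0) * hcross
    have hanti : ‖v‖ * ‖w‖ + ⟪v, w⟫_ℝ ≠ 0 := fun h0 =>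
      h <| sameRay_iff_norm_smul_eq.2 <| (inner_eq_norm_mul_iff_real.1 <| by
        rw [inner_neg_left, norm_neg]; linarith).symm
    linarith [(mul_eq_zero.1 hfac).resolve_right hanti]

theorem mv_eq_toLpLin (M : Matrix (Fin 2) (Fin 2) ℝ) : mv M = toLpLin 2 2 M := rfl

theorem segment_subset_image_closedBall (x : EuclideanSpace ℝ (Fin 2))
    (E : Matrix (Fin 2) (Fin 2) ℝ) {u : EuclideanSpace ℝ (Fin 2)} (hu : ‖u‖ ≤ 1) :
    [x -[ℝ] x + mv E u] ⊆ (fun v => x + mv E v) '' closedBall 0 1 := by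
  have hseg : [x -[ℝ] x + mv E u] = (fun v => x + mv E v) '' [0 -[ℝ] u] := by
    rw [mv_eq_toLpLin, ← image_image (fun v => x + v), ← LinearMap.coe_toAffineMap, image_segment,
      segment_translate_image]
    simp
  rw [hseg]
  exact image_mono ((convex_closedBall 0 1).segment_subset (by simp) (by simpa using hu))

theorem ne_of_not_mem_radial {a b : ℝ} {p : EuclideanSpace ℝ (Fin 2)}
    (h : ¬(p 0 ≤ a ∧ p 1 = b)) : p ≠ !₂[a, b] := by
  rintro rfl
  simp at h

theorem rr_eq_norm (a b : ℝ) (p : EuclideanSpace ℝ (Fin 2)) : rr a b p = ‖p - !₂[a, b]‖ := by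
  rw [rr, ← Real.sqrt_sq (norm_nonneg _), EuclideanSpace.norm_sq_fin_two]
  simp

theorem det_Jh_sub_Jh {a b : ℝ} {p q : EuclideanSpace ℝ (Fin 2)} (hp : p ≠ !₂[a, b])
    (hq : q ≠ !₂[a, b]) :
    (Jh a b q - Jh a b p).det =
      (‖p - !₂[a, b]‖ + ‖q - !₂[a, b]‖) *
        (‖p - !₂[a, b]‖ * ‖q - !₂[a, b]‖ - ⟪p - !₂[a, b], q - !₂[a, b]⟫_ℝ) /
          (‖p - !₂[a, b]‖ ^ 2 * ‖q - !₂[a, b]‖ ^ 2) := by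
  have hr : ‖p - !₂[a, b]‖ ≠ 0 := norm_ne_zero_iff.2 (sub_ne_zero.2 hp)
  have hs : ‖q - !₂[a, b]‖ ≠ 0 := norm_ne_zero_iff.2 (sub_ne_zero.2 hq)
  have hr2 := EuclideanSpace.norm_sq_fin_two (p - !₂[a, b])
  have hs2 := EuclideanSpace.norm_sq_fin_two (q - !₂[a, b])
  rw [Jh, Jh, rr_eq_norm, rr_eq_norm, det_fin_two, EuclideanSpace.real_inner_fin_two]
  simp only [Fin.isValue, PiLp.sub_apply, cons_val_zero, cons_val_one, cons_val_fin_one, neg_sub,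
    Matrix.sub_apply, of_apply, cons_val'] at hr2 hs2 ⊢
  field_simp
  linear_combination (-‖p - !₂[a, b]‖ ^ 3) * hs2 + (-‖q - !₂[a, b]‖ ^ 3) * hr2

/-- **Remainder Lemma, determinant part.** Under the avoidance hypothesis, for every
`u` with `‖u‖ ≤ 1` the determinant of `(J_h(x+Eu) − J_h(x))·E` is nonnegative, and it
vanishes iff `c·u₁ + d·u₂ = 0`. -/
theorem det_jacobianDiff_nonneg_and_eq_zero_iff
    (a b : ℝ) (x : EuclideanSpace ℝ (Fin 2)) (E : Matrix (Fin 2) (Fin 2) ℝ)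
    (hE : 0 < E.det)
    (havoid : ∀ u : EuclideanSpace ℝ (Fin 2), ‖u‖ ≤ 1 →
      ¬((x + mv E u) 0 ≤ a ∧ (x + mv E u) 1 = b))
    (c d : ℝ)
    (hc : c = E 0 0 * (x 1 - b) - E 1 0 * (x 0 - a))
    (hd : d = E 0 1 * (x 1 - b) - E 1 1 * (x 0 - a)) :
    ∀ u : EuclideanSpace ℝ (Fin 2), ‖u‖ ≤ 1 →
      0 ≤ ((Jh a b (x + mv E u) - Jh a b x) * E).det ∧
        (((Jh a b (x + mv E u) - Jh a b x) * E).det = 0 ↔ c * u 0 + d * u 1 = 0) := by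
  intro u hu
  have hx : x ≠ !₂[a, b] := ne_of_not_mem_radial (by simpa [mv] using havoid 0 (by simp))
  have hq : x + mv E u ≠ !₂[a, b] := ne_of_not_mem_radial (havoid u hu)
  have hanti : ¬SameRay ℝ (-(x - !₂[a, b])) (x + mv E u - !₂[a, b]) := fun hray => by
    rw [neg_sub, ← mem_segment_iff_sameRay] at hray
    obtain ⟨v, hv, hxv⟩ := segment_subset_image_closedBall x E hu hray
    exact havoid v (by simpa using hv) (by simp [hxv])
  have hcross : (x - !₂[a, b]) 0 * (x + mv E u - !₂[a, b]) 1 -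
      (x - !₂[a, b]) 1 * (x + mv E u - !₂[a, b]) 0 = -(c * u 0 + d * u 1) := by
    simp only [mv, hc, hd, mulVec_fin_two, PiLp.add_apply, PiLp.sub_apply, cons_val_zero,
      cons_val_one, cons_val_fin_one]
    ring
  have hdet := det_Jh_sub_Jh hx hq
  set v := x - !₂[a, b]
  set w := x + mv E u - !₂[a, b]
  have hv : 0 < ‖v‖ := norm_pos_iff.2 (sub_ne_zero.2 hx)
  have hw : 0 < ‖w‖ := norm_pos_iff.2 (sub_ne_zero.2 hq)
  have hpos : 0 < (‖v‖ + ‖w‖) / (‖v‖ ^ 2 * ‖w‖ ^ 2) * E.det := by positivity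
  have hfactor : ((Jh a b (x + mv E u) - Jh a b x) * E).det =
      (‖v‖ + ‖w‖) / (‖v‖ ^ 2 * ‖w‖ ^ 2) * E.det * (‖v‖ * ‖w‖ - ⟪v, w⟫_ℝ) := by
    rw [det_mul, hdet]
    ring
  rw [hfactor, mul_eq_zero, or_iff_right hpos.ne', sub_eq_zero, eq_comm,
    EuclideanSpace.real_inner_eq_norm_mul_norm_iff_cross_eq_zero hanti, hcross, neg_eq_zero]
  exact ⟨mul_nonneg hpos.le (sub_nonneg.2 (real_inner_le_norm v w)), Iff.rfl⟩
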